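/- Let Ω ⊆ ℝⁿ be open, B > 0, C, ε ∈ ℝ. Suppose u : Ω → ℝ is continuous, C² on ω = {x ∈ Ω : u(x) > 0}, and satisfies u·Δu - B|u|^(1+ε) - C|∇u|² ≥ 0 on ω. If u(x₀) > 0 for some x₀ ∈ Ω, then u does not attain a maximum value on Ω. -/

import Mathlib

/-!
At a maximum point `x₁` of `u` on `Ω` we have `u x₁ ≥ u x₀ > 0`, so `x₁` lies in the open set
`ω` where `u` is `C²`. There `∇u(x₁) = 0` and, by the one-variable second derivative test along
each coordinate line, `Δu(x₁) ≤ 0`; hence `u Δu - B |u|^(1+ε) - C |∇u|² ≤ -B u(x₁)^(1+ε) < 0`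
at `x₁`, contradicting the differential inequality.
-/

noncomputable def lap {n : ℕ} (u : EuclideanSpace ℝ (Fin n) → ℝ)
    (x : EuclideanSpace ℝ (Fin n)) : ℝ :=
  ∑ i, iteratedFDeriv ℝ 2 u x ![EuclideanSpace.single i 1, EuclideanSpace.single i 1]

open Filter Topology

theorem IsLocalMax.deriv_deriv_nonpos {f : ℝ → ℝ} {a : ℝ} (h : IsLocalMax f a)
    (hf : ContinuousAt f a) : deriv (deriv f) a ≤ 0 := by
  by_contra! hpos
  -- `f'' a > 0` would make `a` also a local minimum, so `f` would be locally constant.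
  have hmin : IsLocalMin f a := isLocalMin_of_deriv_deriv_pos hpos h.deriv_eq_zero hf
  have hconst : f =ᶠ[𝓝 a] fun _ ↦ f a :=
    (h.and hmin).mono fun _ hx ↦ le_antisymm hx.1 hx.2
  have hderiv : deriv f =ᶠ[𝓝 a] fun _ ↦ 0 :=
    hconst.eventuallyEq_nhds.mono fun _ hx ↦ by rw [hx.deriv_eq, deriv_const]
  simp [hderiv.deriv_eq] at hpos

theorem IsLocalMax.iteratedFDeriv_two_self_nonpos {E : Type*} [NormedAddCommGroup E]
    [NormedSpace ℝ E] {u : E → ℝ} {a : E} (h : IsLocalMax u a) (hu : ContDiffAt ℝ 2 u a) (v : E) : iteratedFDeriv ℝ 2 u a ![v, v] ≤ 0 := by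
  set ℓ : ℝ → E := fun t ↦ a + t • v
  have hℓ : ∀ t, HasDerivAt ℓ v t := fun t ↦ by
    simpa only [id, one_smul] using ((hasDerivAt_id t).smul_const v).const_add a
  have hℓ0 : ℓ 0 = a := by simp [ℓ]
  have hℓa : Tendsto ℓ (𝓝 0) (𝓝 a) := hℓ0 ▸ (hℓ 0).continuousAt
  have hderiv : deriv (u ∘ ℓ) =ᶠ[𝓝 0] fun t ↦ fderiv ℝ u (ℓ t) v :=
    (hℓa.eventually (hu.eventually (by simp))).mono fun t ht ↦
      ((ht.differentiableAt (by simp)).hasFDerivAt.comp_hasDerivAt t (hℓ t)).deriv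
  have hu' : HasFDerivAt (fderiv ℝ u) (fderiv ℝ (fderiv ℝ u) a) (ℓ 0) := by
    rw [hℓ0]
    exact ((hu.fderiv_right (m := 1) (by norm_num)).differentiableAt one_ne_zero).hasFDerivAt
  have hsecond : deriv (deriv (u ∘ ℓ)) 0 = fderiv ℝ (fderiv ℝ u) a v v := by
    rw [hderiv.deriv_eq]
    simpa using ((hu'.comp_hasDerivAt 0 (hℓ 0)).clm_apply (hasDerivAt_const 0 v)).deriv
  have hmax : IsLocalMax (u ∘ ℓ) 0 := (hℓ0 ▸ h).comp_continuous (hℓ 0).continuousAt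
  rw [iteratedFDeriv_two_apply]
  simpa [hsecond] using
    hmax.deriv_deriv_nonpos (hu.continuousAt.comp_of_eq (hℓ 0).continuousAt hℓ0)

theorem IsLocalMax.gradient_eq_zero {F : Type*} [NormedAddCommGroup F] [InnerProductSpace ℝ F]
    [CompleteSpace F] {u : F → ℝ} {a : F} (h : IsLocalMax u a) : gradient u a = 0 := by
  rw [gradient, h.fderiv_eq_zero, map_zero]

theorem IsLocalMax.lap_nonpos {n : ℕ} {u : EuclideanSpace ℝ (Fin n) → ℝ}
    {a : EuclideanSpace ℝ (Fin n)} (h : IsLocalMax u a) (hu : ContDiffAt ℝ 2 u a) :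
    lap u a ≤ 0 :=
  Finset.sum_nonpos fun _ _ ↦ h.iteratedFDeriv_two_self_nonpos hu _

theorem stmt17_general (n : ℕ) (Ω : Set (EuclideanSpace ℝ (Fin n))) (hΩ : IsOpen Ω)
    (B C ε : ℝ) (hB : 0 < B) (u : EuclideanSpace ℝ (Fin n) → ℝ)
    (hcont : ContinuousOn u Ω)
    (hC2 : ContDiffOn ℝ 2 u {x | x ∈ Ω ∧ 0 < u x})
    (hineq : ∀ x ∈ {x | x ∈ Ω ∧ 0 < u x},
      u x * lap u x - B * |u x| ^ (1 + ε) - C * ‖gradient u x‖ ^ 2 ≥ 0)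
    (x₀ : EuclideanSpace ℝ (Fin n)) (hx₀ : x₀ ∈ Ω) (hux₀ : 0 < u x₀) :
    ¬∃ x₁ ∈ Ω, ∀ x ∈ Ω, u x ≤ u x₁ := by
  rintro ⟨x₁, hx₁, hmaxOn⟩
  have hΩx₁ : Ω ∈ 𝓝 x₁ := hΩ.mem_nhds hx₁
  have hpos : 0 < u x₁ := hux₀.trans_le (hmaxOn x₀ hx₀)
  have hmax : IsLocalMax u x₁ := eventually_of_mem hΩx₁ hmaxOn
  have hω : {x | x ∈ Ω ∧ 0 < u x} ∈ 𝓝 x₁ :=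
    inter_mem hΩx₁ ((hcont.continuousAt hΩx₁).eventually (lt_mem_nhds hpos))
  have hlap : lap u x₁ ≤ 0 := hmax.lap_nonpos (hC2.contDiffAt hω)
  have hineq₁ := hineq x₁ ⟨hx₁, hpos⟩
  rw [hmax.gradient_eq_zero, norm_zero, zero_pow two_ne_zero, mul_zero, sub_zero] at hineq₁
  have hpow : 0 < |u x₁| ^ (1 + ε) := by positivity
  linarith [mul_nonpos_of_nonneg_of_nonpos hpos.le hlap, mul_pos hB hpow]

theorem stmt17 (n : ℕ) (hn : 1 ≤ n) (Ω : Set (EuclideanSpace ℝ (Fin n))) (hΩ : IsOpen Ω)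
    (B C ε : ℝ) (hB : 0 < B) (u : EuclideanSpace ℝ (Fin n) → ℝ)
    (hcont : ContinuousOn u Ω)
    (hC2 : ContDiffOn ℝ 2 u {x | x ∈ Ω ∧ 0 < u x})
    (hineq : ∀ x ∈ {x | x ∈ Ω ∧ 0 < u x},
      u x * lap u x - B * |u x| ^ (1 + ε) - C * ‖gradient u x‖ ^ 2 ≥ 0)
    (x₀ : EuclideanSpace ℝ (Fin n)) (hx₀ : x₀ ∈ Ω) (hux₀ : 0 < u x₀) :
    ¬∃ x₁ ∈ Ω, ∀ x ∈ Ω, u x ≤ u x₁ :=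
  stmt17_general n Ω hΩ B C ε hB u hcont hC2 hineq x₀ hx₀ hux₀
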